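/- arXiv:1406.3893 — 3 statements merged into one kernel-verified Lean document; each statement's English description precedes it below -/
import Mathlib

section
/- Let R1, R2 be commutative rings with unity, ψ: R1 → R2 a ring homomorphism, M1 an R1-algebra that is free as an R1-module, and M2 an R2-algebra isomorphic to R2 ⊗_{R1} M1. Let {g_λ}_{λ∈Λ} be R1-algebra generators of M1, and let Ξ1: R1[x_λ] → M1 (x_λ ↦ g_λ) and Ξ2: R2[x_λ] → M2 (x_λ ↦ ψ*(g_λ)) be the induced surjections, where ψ*: M1 → M2 is induced by ψ. If {r_θ}_{θ∈Θ} generates Ker Ξ1, then {ψ*(r_θ)}_{θ∈Θ} generates Ker Ξ2. -/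
open scoped TensorProduct

/-- **Proposition (images of relations).**
If `{r_θ}` generates `Ker Ξ₁`, then `{ψ*(r_θ)}` generates `Ker Ξ₂`, where
`Ξ₁ : R₁[x_λ] → M₁, x_λ ↦ g_λ` and `Ξ₂ : R₂[x_λ] → M₂, x_λ ↦ ψ*(g_λ)`,
`M₁` is a free `R₁`-module and `M₂ ≅ R₂ ⊗_{R₁} M₁`. -/
theorem stmt0 {R1 R2 M1 M2 : Type*} [CommRing R1] [CommRing R2] [CommRing M1]
    [CommRing M2] [Algebra R1 R2] [Algebra R1 M1] [Algebra R2 M2]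
    [Module.Free R1 M1]
    (e : (R2 ⊗[R1] M1) ≃ₐ[R2] M2)
    {Λ Θ : Type*} (g : Λ → M1)
    (hgen : Algebra.adjoin R1 (Set.range g) = ⊤)
    (r : Θ → MvPolynomial Λ R1)
    (hr : Ideal.span (Set.range r) = RingHom.ker (MvPolynomial.aeval g).toRingHom) :
    Ideal.span (Set.range fun θ => MvPolynomial.map (algebraMap R1 R2) (r θ)) =
      RingHom.ker (MvPolynomial.aeval
        (fun l => e ((1 : R2) ⊗ₜ[R1] g l)) : MvPolynomial Λ R2 →ₐ[R2] M2).toRingHom := by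
  have hsurj : Function.Surjective (MvPolynomial.aeval g : MvPolynomial Λ R1 →ₐ[R1] M1) := by
    rw [← AlgHom.range_eq_top, ← Algebra.adjoin_range_eq_range_aeval]; exact hgen
  let P : Algebra.Presentation R1 M1 Λ Θ :=
    { toGenerators := Algebra.Generators.ofSurjective g hsurj
      relation := r
      span_range_relation_eq_ker := by
        rw [Algebra.Generators.ker_eq_ker_aeval_val]
        exact hr }
  have key := (P.baseChange R2).span_range_relation_eq_ker
  rw [Algebra.Generators.ker_eq_ker_aeval_val] at key
  have hval : (P.baseChange R2).val = fun l => (1 : R2) ⊗ₜ[R1] g l := rfl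
  have hrel : (P.baseChange R2).relation = fun θ =>
      MvPolynomial.map (algebraMap R1 R2) (r θ) := rfl
  rw [hval, hrel] at key
  have hcomp : (MvPolynomial.aeval (fun l => e ((1 : R2) ⊗ₜ[R1] g l)) :
      MvPolynomial Λ R2 →ₐ[R2] M2) =
      (e.toAlgHom.comp (MvPolynomial.aeval (fun l => (1 : R2) ⊗ₜ[R1] g l))) := by
    ext l
    simp
  rw [hcomp]
  rw [key]
  ext x
  simp only [RingHom.mem_ker, AlgHom.toRingHom_eq_coe, RingHom.coe_coe, AlgHom.coe_comp,
    Function.comp_apply, AlgEquiv.coe_algHom, EmbeddingLike.map_eq_zero_iff]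
end

section
/- Let G be a compact connected Lie group with maximal torus T such that the set Φ⁺ of positive roots is pairwise relatively prime in H*(BT), and let P ⊇ B be a parabolic subgroup of the complexification. Let f be a GKM function on the GKM graph G(G_ℂ/P) and α a root. Define (δ_α f)(v) = (f(v) − σ_α·f(v))/α, where (w·f)(v) = w(f(w⁻¹v)). Then δ_α f is a well-defined GKM function on G(G_ℂ/P); in particular, for every vertex v, f(v) − σ_α(f(σ_α v)) is divisible by α in H*(BT), and for every positive root β with β ≠ α, f(v) − σ_α f(σ_α v) − f(σ_β v) + σ_α f(σ_α σ_β v) is divisible by αβ. -/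
open MvPolynomial

/-- Two distinct positive roots are relatively prime in `H*(BT)`:
they have no non-unit common divisor. -/
def PairwiseRelPrime {m : ℕ} (Φp : Finset (MvPolynomial (Fin m) ℤ)) : Prop :=
  ∀ α ∈ Φp, ∀ β ∈ Φp, α ≠ β → ∀ d, d ∣ α → d ∣ β → IsUnit d

set_option maxHeartbeats 800000 in
/-- **Well-definedness of the left divided difference operator.**
`H*(BT)` is modelled as the polynomial ring `S = ℤ[x₁, …, x_m]` (generated by
its linear part, the weight lattice `H²(BT)`), on which the Weyl group `W` acts
by degree-preserving ring automorphisms; `Φp = Φ⁺` is the (finite) set of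
positive roots, which are linear; the vertex set of the GKM graph `𝒢(G_ℂ/P)`
is the `W`-set `Q = W/W_P`, whose edges join `v` and `σ_β v` with label `(β)`
for `β ∈ Φ⁺`; `s β ∈ W` denotes the reflection `σ_β`.  Assume `Φ⁺` is pairwise
relatively prime in `H*(BT)`.  If `f` is a GKM function on `𝒢(G_ℂ/P)` and
`α ∈ Φ⁺`, then `δ_α f`, defined by `(δ_α f)(v) = (f(v) − σ_α·f(v))/α` where
`(w·f)(v) = w(f(w⁻¹v))`, is a well-defined GKM function; in particular for
every vertex `v`, `f(v) − σ_α(f(σ_α v))` is divisible by `α`, and for every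
positive root `β ≠ α`,
`f(v) − σ_α f(σ_α v) − f(σ_β v) + σ_α f(σ_α σ_β v)` is divisible by `αβ`. -/
theorem stmt14 {m : ℕ} {W Q : Type*} [Group W]
    [MulSemiringAction W (MvPolynomial (Fin m) ℤ)] [MulAction W Q]
    (Φp : Finset (MvPolynomial (Fin m) ℤ))
    -- the roots are elements of `H²(BT)`
    (hhom : ∀ α ∈ Φp, IsHomogeneous α 1)
    -- `W` acts by degree-preserving automorphisms
    (hdeg : ∀ w : W, ∀ p : MvPolynomial (Fin m) ℤ, ∀ n,
      IsHomogeneous p n → IsHomogeneous (w • p) n)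
    -- `Φ⁺` is pairwise relatively prime in `H*(BT)`
    (hcop : PairwiseRelPrime Φp)
    -- the reflections `σ_β` for `β ∈ Φ⁺`
    (s : MvPolynomial (Fin m) ℤ → W)
    (hinv : ∀ β ∈ Φp, s β * s β = 1)
    (hsββ : ∀ β ∈ Φp, s β • β = -β)
    -- `2(x,β)/(β,β)` is an integer for every weight `x`
    (hcrys : ∀ β ∈ Φp, ∀ x : MvPolynomial (Fin m) ℤ,
      IsHomogeneous x 1 → ∃ k : ℤ, s β • x = x - k • β)
    -- reflections permute the roots `Φ = Φ⁺ ∪ (−Φ⁺)` …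
    (hperm : ∀ β ∈ Φp, ∀ γ ∈ Φp,
      s β • γ ∈ (Φp : Set (MvPolynomial (Fin m) ℤ)) ∪ (-(Φp : Set (MvPolynomial (Fin m) ℤ))))
    -- … compatibly with conjugation: `σ_{σ_β(γ)} = σ_β σ_γ σ_β⁻¹`
    (hconj : ∀ β ∈ Φp, ∀ γ ∈ Φp, ∀ γ' ∈ Φp,
      (s β • γ = γ' ∨ s β • γ = -γ') → s β * s γ * (s β)⁻¹ = s γ')
    -- `f` is a GKM function on `𝒢(G_ℂ/P)`
    (f : Q → MvPolynomial (Fin m) ℤ)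
    (hf : ∀ β ∈ Φp, ∀ v : Q, β ∣ f v - f (s β • v))
    (α : MvPolynomial (Fin m) ℤ) (hα : α ∈ Φp) :
    -- `δ_α f` is well defined …
    (∀ v : Q, α ∣ f v - s α • f (s α • v)) ∧
    -- … and is a GKM function
    (∃ g : Q → MvPolynomial (Fin m) ℤ,
      (∀ v : Q, α * g v = f v - s α • f (s α • v)) ∧
      (∀ β ∈ Φp, ∀ v : Q, β ∣ g v - g (s β • v))) ∧
    -- in particular, for distinct positive roots the numerators differ by a
    -- multiple of `αβ`
    (∀ β ∈ Φp, β ≠ α → ∀ v : Q,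
      α * β ∣ f v - s α • f (s α • v) - f (s β • v) + s α • f (s α • s β • v)) := by
  classical
  -- the action of any `w` fixes integer constants
  have hC : ∀ (w : W) (a : ℤ), w • ((C a : MvPolynomial (Fin m) ℤ)) = C a := by
    intro w a
    have h1 : (C a : MvPolynomial (Fin m) ℤ) = (a : MvPolynomial (Fin m) ℤ) := by simp
    rw [h1]
    exact map_intCast (MulSemiringAction.toRingHom W (MvPolynomial (Fin m) ℤ) w) a
  -- key lemma: for any polynomial `p` and root `β`, `β ∣ p - σ_β p`
  have lemA : ∀ β ∈ Φp, ∀ p : MvPolynomial (Fin m) ℤ, β ∣ p - s β • p := by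
    intro β hβ p
    induction p using MvPolynomial.induction_on with
    | C a => rw [hC]; simp
    | add p q hp hq =>
        have e : (p + q) - s β • (p + q) = (p - s β • p) + (q - s β • q) := by
          rw [smul_add]; ring
        rw [e]; exact dvd_add hp hq
    | mul_X p i hp =>
        obtain ⟨k, hk⟩ := hcrys β hβ (X i) (isHomogeneous_X _ _)
        have e : p * X i - s β • (p * X i)
            = (p - s β • p) * X i + (s β • p) * ((k : MvPolynomial (Fin m) ℤ) * β) := by
          rw [smul_mul', hk, zsmul_eq_mul]; ring
        rw [e]
        exact dvd_add (hp.mul_right _) (Dvd.dvd.mul_left ⟨(k : MvPolynomial (Fin m) ℤ), mul_comm _ _⟩ _)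
  have hinvQ : ∀ β ∈ Φp, ∀ v : Q, s β • s β • v = v := by
    intro β hβ v; rw [← mul_smul, hinv β hβ, one_smul]
  have hinvS : ∀ β ∈ Φp, ∀ p : MvPolynomial (Fin m) ℤ, s β • s β • p = p := by
    intro β hβ p; rw [← mul_smul, hinv β hβ, one_smul]
  by_cases h0 : α = 0
  · -- degenerate case: `α = 0`, so `σ_α` acts trivially and everything vanishes
    have hfix : ∀ p : MvPolynomial (Fin m) ℤ, s α • p = p := by
      intro p
      have h : (0 : MvPolynomial (Fin m) ℤ) ∣ p - s α • p := by
        rw [← h0]; exact lemA α hα p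
      rw [zero_dvd_iff, sub_eq_zero] at h
      exact h.symm
    have hF0 : ∀ v : Q, f v - s α • f (s α • v) = 0 := by
      intro v
      rw [hfix]
      have h : (0 : MvPolynomial (Fin m) ℤ) ∣ f v - f (s α • v) := by
        rw [← h0]; exact hf α hα v
      rw [zero_dvd_iff] at h
      exact h
    refine ⟨fun v => by rw [hF0]; exact dvd_zero _, ⟨fun _ => 0, fun v => by
      rw [mul_zero, hF0], fun β hβ v => by simp⟩, ?_⟩
    intro β hβ hne v
    have e : f v - s α • f (s α • v) - f (s β • v) + s α • f (s α • s β • v)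
        = (f v - s α • f (s α • v)) - (f (s β • v) - s α • f (s α • (s β • v))) := by ring
    rw [e, hF0, hF0, sub_zero]
    exact dvd_zero _
  · -- main case: `α ≠ 0`
    have p1 : ∀ v : Q, α ∣ f v - s α • f (s α • v) := by
      intro v
      have e : f v - s α • f (s α • v)
          = (f v - f (s α • v)) + (f (s α • v) - s α • f (s α • v)) := by ring
      rw [e]
      exact dvd_add (hf α hα v) (lemA α hα _)
    -- the numerators differ by a multiple of β along a β-edge
    have p3core : ∀ β ∈ Φp, β ≠ α → ∀ v : Q,
        β ∣ (f v - s α • f (s α • v)) - (f (s β • v) - s α • f (s α • s β • v)) := by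
      intro β hβ hne v
      obtain ⟨γ', hγ'mem, hcase⟩ :
          ∃ γ' ∈ Φp, s α • β = γ' ∨ s α • β = -γ' := by
        rcases hperm α hα β hβ with h | h
        · exact ⟨s α • β, h, Or.inl rfl⟩
        · exact ⟨-(s α • β), by simpa using h, Or.inr (neg_neg _).symm⟩
      have hmul : s α * s β = s γ' * s α := by
        have h := hconj α hα β hβ γ' hγ'mem hcase
        rw [← h]; group
      have hsmulγ : s α • γ' = β ∨ s α • γ' = -β := by
        rcases hcase with h | h
        · left; rw [← h, hinvS α hα]
        · right
          have : s α • (-γ') = β := by rw [← h, hinvS α hα]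
          rw [smul_neg] at this
          rw [← this, neg_neg]
      have hv : s α • s β • v = s γ' • s α • v := by
        rw [← mul_smul, ← mul_smul, hmul]
      obtain ⟨c, hc⟩ := hf γ' hγ'mem (s α • v)
      have e : (f v - s α • f (s α • v)) - (f (s β • v) - s α • f (s α • s β • v))
          = (f v - f (s β • v)) - s α • (f (s α • v) - f (s α • s β • v)) := by
        rw [smul_sub]; ring
      rw [e]
      refine dvd_sub (hf β hβ v) ?_
      rw [hv, hc, smul_mul']
      rcases hsmulγ with h | h
      · rw [h]; exact dvd_mul_right β _
      · rw [h, neg_mul]; exact dvd_neg.mpr (dvd_mul_right β _)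
    have hrel : ∀ β ∈ Φp, β ≠ α → IsRelPrime α β := by
      intro β hβ hne d hdα hdβ
      exact hcop α hα β hβ (fun h => hne h.symm) d hdα hdβ
    have p3 : ∀ β ∈ Φp, β ≠ α → ∀ v : Q,
        α * β ∣ f v - s α • f (s α • v) - f (s β • v) + s α • f (s α • s β • v) := by
      intro β hβ hne v
      have e : f v - s α • f (s α • v) - f (s β • v) + s α • f (s α • s β • v)
          = (f v - s α • f (s α • v)) - (f (s β • v) - s α • f (s α • s β • v)) := by ring
      rw [e]
      exact (hrel β hβ hne).mul_dvd (dvd_sub (p1 v) (p1 (s β • v))) (p3core β hβ hne v)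
    choose g hg using p1
    refine ⟨fun v => ⟨g v, hg v⟩, ⟨g, fun v => (hg v).symm, ?_⟩, p3⟩
    intro β hβ v
    by_cases hβα : β = α
    · subst hβα
      -- along the β = α edge
      have h1 := hg (s β • v)
      rw [hinvQ β hβ v] at h1
      have h2 : s β • (f (s β • v) - s β • f v) = (s β • β) * (s β • g (s β • v)) := by
        rw [h1, smul_mul']
      rw [smul_sub, hinvS β hβ, hsββ β hβ, neg_mul] at h2
      have h3 : β * g v = β * (s β • g (s β • v)) := by
        linear_combination - hg v - h2
      have hgfix : s β • g (s β • v) = g v := (mul_left_cancel₀ h0 h3).symm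
      have h5 := lemA β hβ (g (s β • v))
      rw [hgfix] at h5
      have := dvd_neg.mpr h5
      simpa [neg_sub] using this
    · have h8 : α * β ∣ α * (g v - g (s β • v)) := by
        have e : α * (g v - g (s β • v))
            = f v - s α • f (s α • v) - f (s β • v) + s α • f (s α • s β • v) := by
          rw [mul_sub, ← hg v, ← hg (s β • v)]; ring
        rw [e]
        exact p3 β hβ hβα v
      obtain ⟨c, hc⟩ := h8
      rw [mul_assoc] at hc
      exact ⟨c, mul_left_cancel₀ h0 hc⟩
end

section
/- For G = Sp(1) × Sp(1) with root system {±2t₁, ±2t₂} in H*(BT) = ℤ[t₁, t₂], the divided difference operator fails: the GKM function f on G(G_ℂ/B) defined by f(e) = 2t₁t₂ and f(w) = 0 for w ≠ e satisfies that δ_{2t₁}f, defined by (δ_{2t₁}f)(v) = (f(v) − σ_{2t₁}·f(v))/(2t₁), has (δ_{2t₁}f)(e) − (δ_{2t₁}f)(σ_{2t₂}) = t₂ ∉ (2t₂); hence δ_{2t₁}f is not a GKM function. -/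
open MvPolynomial

/-- **Example (failure of the divided difference operator for `Sp(1) × Sp(1)`).**
Here `H*(BT) = ℤ[t₁, t₂]` with root system `{±2t₁, ±2t₂}`; the Weyl group is
`(ℤ/2)²`, acting so that `σ_{2t₁}` (the element `(1,0)`) negates `t₁`, realized
on `H*(BT)` by the algebra map `σ₁ : t₁ ↦ -t₁, t₂ ↦ t₂`.  The GKM function `f`
with `f(e) = 2t₁t₂` and `f(w) = 0` for `w ≠ e` has
`(δ_{2t₁}f)(v) = (f(v) − σ_{2t₁}·f(v))/(2t₁)`, so any `g` with
`2t₁·g(v) = f(v) − σ₁(f(σ_{2t₁}v))` for all `v` satisfies `g(e) = t₂`,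
`g(σ_{2t₂}) = 0`, and `g(e) − g(σ_{2t₂}) = t₂ ∉ (2t₂)`; hence `δ_{2t₁}f` is not
a GKM function. -/
theorem stmt16
    (t1 t2 : MvPolynomial (Fin 2) ℤ) (ht1 : t1 = X 0) (ht2 : t2 = X 1)
    (σ1 : MvPolynomial (Fin 2) ℤ →ₐ[ℤ] MvPolynomial (Fin 2) ℤ)
    (hσ1 : σ1 = aeval ![-t1, t2])
    (f : ZMod 2 × ZMod 2 → MvPolynomial (Fin 2) ℤ)
    (hf : f = fun w => if w = (0, 0) then 2 * t1 * t2 else 0) :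
    ∀ g : ZMod 2 × ZMod 2 → MvPolynomial (Fin 2) ℤ,
      (∀ v, 2 * t1 * g v = f v - σ1 (f ((1, 0) + v))) →
        g (0, 0) = t2 ∧ g (0, 1) = 0 ∧
          g (0, 0) - g (0, 1) ∉ Ideal.span {2 * t2} := by
  intro g hg
  have ht1ne : (2 * t1 : MvPolynomial (Fin 2) ℤ) ≠ 0 := by
    subst ht1
    intro h
    have := congrArg (eval (fun _ => (1:ℤ))) h
    simp at this
  have cancel : ∀ a b : MvPolynomial (Fin 2) ℤ, 2 * t1 * a = 2 * t1 * b → a = b := by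
    intro a b h
    exact mul_left_cancel₀ ht1ne h
  have h00 : g (0,0) = t2 := by
    apply cancel
    rw [hg (0,0), hf]
    have e1 : ((1,0)+(0,0) : ZMod 2 × ZMod 2) ≠ (0,0) := by decide
    simp only [if_pos rfl, if_neg e1, map_zero, sub_zero, if_true]
  have h01 : g (0,1) = 0 := by
    apply cancel
    have := hg (0,1)
    rw [this, hf]
    have h1 : ((1,0) + (0,1) : ZMod 2 × ZMod 2) ≠ (0,0) := by decide
    have h2 : ((0,1) : ZMod 2 × ZMod 2) ≠ (0,0) := by decide
    simp only [if_neg h1, if_neg h2, map_zero, sub_zero, mul_zero]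
  refine ⟨h00, h01, ?_⟩
  rw [h00, h01, sub_zero, ht2]
  intro hmem
  rw [Ideal.mem_span_singleton] at hmem
  obtain ⟨p, hp⟩ := hmem
  have := congrArg (eval (fun _ => (1:ℤ))) hp
  simp [ht2] at this
  omega
end
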